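/- arXiv:1810.02758 — 3 statements merged into one kernel-verified Lean document; each statement's English description precedes it below -/
import Mathlib

section
/- With exponential utility u(x)=β(e^{αx}-1) and dual variables μ_k = 0, λ_{k,k-1} = (Σ_{ℓ≥k} f(v_ℓ))·z_M/(u(v_k)-u(v_k-z_M)), λ_{k,k'} = 0 otherwise, the function Γ_k(z) = f(v_k)z + λ_{k,k-1}·u(v_k - z) − λ_{k+1,k}·u(v_{k+1} - z) satisfies Γ_k(0) = Γ_k(z_M) = f(v_k)·φ_u(k)·z_M, where φ_u is the single-buyer virtual value function. -/
/-!
Write `D_j = u(v_j) - u(v_j - z_M)`, so that `λ_j = S_j z_M / D_j`. At `z = 0` the identity is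
the definition of `φ_u` multiplied out. Moreover `Γ_k(z_M) - Γ_k(0) = f(v_k) z_M - λ_k D_k + λ_{k+1} D_{k+1}`,
and `λ_j D_j = S_j z_M` because `u` is injective (`D_j = 0` forces `z_M = 0`), so the difference is
`(f(v_k) - S_k + S_{k+1}) z_M = 0`.
-/

open Finset Real

lemma strictMono_expUtility {α β : ℝ} (hα : 0 < α) (hβ : 0 < β) :
    StrictMono fun x => β * (exp (α * x) - 1) := fun _ _ hxy =>
  mul_lt_mul_of_pos_left (sub_lt_sub_right (exp_lt_exp.2 (mul_lt_mul_of_pos_left hxy hα)) 1) hβ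

lemma div_sub_mul_sub_cancel_of_injective {u : ℝ → ℝ} (hu : Function.Injective u) (s x z : ℝ) :
    s * z / (u x - u (x - z)) * (u x - u (x - z)) = s * z :=
  div_mul_cancel_of_imp fun h => by
    rw [show z = 0 by linarith [hu (sub_eq_zero.1 h)], mul_zero]

theorem stmt8_general (α β zM : ℝ) (hα : 0 < α) (hβ : 0 < β)
    (K : ℕ) (v f : ℕ → ℝ)
    (hf : ∀ k ∈ Finset.Icc 1 K, 0 < f k)
    (u : ℝ → ℝ) (hu : u = fun x => β * (Real.exp (α * x) - 1))
    (S : ℕ → ℝ) (hS : ∀ k, S k = ∑ ℓ ∈ Finset.Icc k K, f ℓ)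
    (φ : ℕ → ℝ)
    (hφ : ∀ k, φ k = (1 / f k) * (S k * u (v k) / (u (v k) - u (v k - zM))
        - S (k + 1) * u (v (k + 1)) / (u (v (k + 1)) - u (v (k + 1) - zM))))
    (lam : ℕ → ℝ) (hlam : ∀ k, lam k = S k * zM / (u (v k) - u (v k - zM)))
    (Γ : ℕ → ℝ → ℝ)
    (hΓ : ∀ k z, Γ k z = f k * z + lam k * u (v k - z) - lam (k + 1) * u (v (k + 1) - z)) :
    ∀ k ∈ Finset.Icc 1 K, Γ k 0 = f k * φ k * zM ∧ Γ k zM = f k * φ k * zM := by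
  intro k hk
  have hfk : f k ≠ 0 := (hf k hk).ne'
  have hu_inj : Function.Injective u := hu ▸ (strictMono_expUtility hα hβ).injective
  have hS_succ : S k = f k + S (k + 1) := by
    rw [hS, hS, Icc_add_one_left_eq_Ioc, add_sum_Ioc_eq_sum_Icc (mem_Icc.1 hk).2]
  have hΓ_zero : Γ k 0 = f k * φ k * zM := by
    rw [hΓ, hφ, hlam, hlam, ← mul_assoc, mul_one_div_cancel hfk]
    simp only [mul_zero, sub_zero, zero_add]
    ring
  refine ⟨hΓ_zero, ?_⟩
  calc Γ k zM = Γ k 0 + f k * zM - lam k * (u (v k) - u (v k - zM))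
        + lam (k + 1) * (u (v (k + 1)) - u (v (k + 1) - zM)) := by
        rw [hΓ, hΓ, sub_zero, sub_zero]; ring
    _ = Γ k 0 + (f k - S k + S (k + 1)) * zM := by
        rw [hlam, hlam, div_sub_mul_sub_cancel_of_injective hu_inj,
          div_sub_mul_sub_cancel_of_injective hu_inj]
        ring
    _ = f k * φ k * zM := by rw [hS_succ, hΓ_zero]; ring

/-- With the dual assignment λ_{k,k-1} = (Σ_{ℓ≥k} f_ℓ)·z_M/(u(v_k)-u(v_k-z_M)),
the dual constraint function Γ_k satisfies Γ_k(0) = Γ_k(z_M) = f_k·φ_u(k)·z_M. -/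
theorem stmt8 (α β zM : ℝ) (hα : 0 < α) (hβ : 0 < β)
    (K : ℕ) (hK : 1 ≤ K) (v f : ℕ → ℝ)
    (hv1 : v 1 = 0) (hvmono : StrictMonoOn v (Set.Icc 1 K)) (hvK : v K < zM)
    (hf : ∀ k ∈ Finset.Icc 1 K, 0 < f k)
    (u : ℝ → ℝ) (hu : u = fun x => β * (Real.exp (α * x) - 1))
    (S : ℕ → ℝ) (hS : ∀ k, S k = ∑ ℓ ∈ Finset.Icc k K, f ℓ)
    (φ : ℕ → ℝ)
    (hφ : ∀ k, φ k = (1 / f k) * (S k * u (v k) / (u (v k) - u (v k - zM))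
        - S (k + 1) * u (v (k + 1)) / (u (v (k + 1)) - u (v (k + 1) - zM))))
    (lam : ℕ → ℝ) (hlam : ∀ k, lam k = S k * zM / (u (v k) - u (v k - zM)))
    (Γ : ℕ → ℝ → ℝ)
    (hΓ : ∀ k z, Γ k z = f k * z + lam k * u (v k - z) - lam (k + 1) * u (v (k + 1) - z)) :
    ∀ k ∈ Finset.Icc 1 K, Γ k 0 = f k * φ k * zM ∧ Γ k zM = f k * φ k * zM :=
  stmt8_general α β zM hα hβ K v f hf u hu S hS φ hφ lam hlam Γ hΓ
end

section
/- If the single-buyer virtual value function φ_u is monotone increasing (regularity), then Σ_k max{0, f(v_k)·φ_u(k)·z_M} = max_{k∈[K]} [(Σ_{ℓ≥k} f(v_ℓ))·z_M·u(v_k)/(u(v_k)-u(v_k-z_M))], i.e., the sum of positive parts of the cumulative virtual values equals the optimal take-it-or-leave-it revenue. -/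
/-!
Write `R k` for the revenue of the take-it-or-leave-it price with threshold `v k`. By definition
of `φ`, the `k`-th term `f k * φ k * zM` is the increment `R k - R (k + 1)`, so the revenue `R k`
is the tail sum of these terms from `k` on (`R (K + 1) = 0` since no buyer remains), and the full
sum vanishes (`R 1 = 0` since `u (v 1) = u 0 = 0`). Regularity makes the set of nonnegative terms
an upper interval `[k₀, K]`, so the sum of positive parts is the tail sum from `k₀`, while every
other tail sum is at most the sum of positive parts.
-/

open Finset

theorem sum_max_zero_eq_sup'_sum_filter_le {ι : Type*} [LinearOrder ι] (s : Finset ι)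
    (hs : s.Nonempty) (d : ι → ℝ) (hd : ∀ a ∈ s, ∀ b ∈ s, a ≤ b → 0 ≤ d a → 0 ≤ d b)
    (hsum : ∑ x ∈ s, d x = 0) :
    ∑ x ∈ s, max 0 (d x) = s.sup' hs (fun k => ∑ x ∈ s with k ≤ x, d x) := by
  have tail_le (k : ι) : ∑ x ∈ s with k ≤ x, d x ≤ ∑ x ∈ s, max 0 (d x) :=
    calc ∑ x ∈ s with k ≤ x, d x ≤ ∑ x ∈ s with k ≤ x, max 0 (d x) :=
          sum_le_sum fun x _ => le_max_right _ _
      _ ≤ ∑ x ∈ s, max 0 (d x) :=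
          sum_le_sum_of_subset_of_nonneg (filter_subset _ _) fun x _ _ => le_max_left _ _
  refine le_antisymm ?_ (sup'_le hs _ fun k _ => tail_le k)
  have hpos : ∑ x ∈ s, max 0 (d x) = ∑ x ∈ s with 0 ≤ d x, d x := by
    rw [sum_filter]
    exact sum_congr rfl fun x _ => max_def 0 (d x)
  rw [hpos]
  rcases (s.filter (0 ≤ d ·)).eq_empty_or_nonempty with hP | hP
  · calc ∑ x ∈ s with 0 ≤ d x, d x = ∑ x ∈ s with s.min' hs ≤ x, d x := by
          rw [hP, sum_empty, filter_true_of_mem fun x hx => s.min'_le x hx, hsum]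
      _ ≤ _ := le_sup' (fun k => ∑ x ∈ s with k ≤ x, d x) (s.min'_mem hs)
  · set k₀ := (s.filter (0 ≤ d ·)).min' hP
    obtain ⟨hk₀s, hk₀d⟩ := mem_filter.1 ((s.filter (0 ≤ d ·)).min'_mem hP)
    have hupper : s.filter (0 ≤ d ·) = s.filter (k₀ ≤ ·) := by
      ext x
      simp only [mem_filter, and_congr_right_iff]
      intro hx
      exact ⟨fun hdx => min'_le _ x (mem_filter.2 ⟨hx, hdx⟩), fun hk₀x => hd k₀ hk₀s x hx hk₀x hk₀d⟩
    calc ∑ x ∈ s with 0 ≤ d x, d x = ∑ x ∈ s with k₀ ≤ x, d x := by rw [hupper]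
      _ ≤ _ := le_sup' (fun k => ∑ x ∈ s with k ≤ x, d x) hk₀s

theorem sum_Icc_max_zero_sub_succ_eq_sup' {m n : ℕ} (hmn : m ≤ n) (R : ℕ → ℝ)
    (hd : ∀ a ∈ Icc m n, ∀ b ∈ Icc m n, a ≤ b → 0 ≤ R a - R (a + 1) → 0 ≤ R b - R (b + 1))
    (hR : R m = R (n + 1)) :
    ∑ k ∈ Icc m n, max 0 (R k - R (k + 1))
      = (Icc m n).sup' (nonempty_Icc.mpr hmn) (fun k => R k - R (n + 1)) := by
  have tail (k : ℕ) (hk : k ∈ Icc m n) :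
      ∑ x ∈ Icc m n with k ≤ x, (R x - R (x + 1)) = R k - R (n + 1) := by
    have hIcc : (Icc m n).filter (k ≤ ·) = Icc k n := by
      ext x; simp only [mem_filter, mem_Icc] at hk ⊢; omega
    rw [hIcc, ← neg_sub, ← sum_Icc_sub (mem_Icc.1 hk).2, ← sum_neg_distrib]
    simp only [neg_sub]
  have hsum : ∑ k ∈ Icc m n, (R k - R (k + 1)) = 0 := by
    have hall : (Icc m n).filter (m ≤ ·) = Icc m n :=
      filter_true_of_mem fun x hx => (mem_Icc.1 hx).1
    rw [← hall, tail m (left_mem_Icc.2 hmn), hR, sub_self]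
  rw [sum_max_zero_eq_sup'_sum_filter_le _ (nonempty_Icc.mpr hmn) _ hd hsum]
  exact sup'_congr _ rfl tail

theorem stmt10_general (α β zM : ℝ)
    (K : ℕ) (hK : 1 ≤ K) (v f : ℕ → ℝ)
    (hv1 : v 1 = 0) (hvmono : StrictMonoOn v (Set.Icc 1 K)) (hvK : v K < zM)
    (hf : ∀ k ∈ Finset.Icc 1 K, 0 < f k)
    (u : ℝ → ℝ) (hu : u = fun x => β * (Real.exp (α * x) - 1))
    (S : ℕ → ℝ) (hS : ∀ k, S k = ∑ ℓ ∈ Finset.Icc k K, f ℓ)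
    (φ : ℕ → ℝ)
    (hφ : ∀ k, φ k = (1 / f k) * (S k * u (v k) / (u (v k) - u (v k - zM))
        - S (k + 1) * u (v (k + 1)) / (u (v (k + 1)) - u (v (k + 1) - zM))))
    (hreg : StrictMonoOn φ (Set.Icc 1 K)) :
    ∑ k ∈ Finset.Icc 1 K, max 0 (f k * φ k * zM)
      = (Finset.Icc 1 K).sup' (Finset.nonempty_Icc.mpr hK)
          (fun k => S k * zM * u (v k) / (u (v k) - u (v k - zM))) := by
  have hzM : 0 < zM :=
    (hv1 ▸ hvmono.monotoneOn (Set.left_mem_Icc.2 hK) (Set.right_mem_Icc.2 hK) hK).trans_lt hvK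
  set R : ℕ → ℝ := fun k => S k * zM * u (v k) / (u (v k) - u (v k - zM))
  have hterm : ∀ k ∈ Icc 1 K, f k * φ k * zM = R k - R (k + 1) := by
    intro k hk
    rw [hφ k]
    field_simp [(hf k hk).ne']
    ring
  have hR_succ : R (K + 1) = 0 := by simp [R, hS]
  have hR_one : R 1 = 0 := by simp [R, hu, hv1]
  have hsign : ∀ a ∈ Icc 1 K, ∀ b ∈ Icc 1 K, a ≤ b →
      0 ≤ R a - R (a + 1) → 0 ≤ R b - R (b + 1) := by
    intro a ha b hb hab hda
    rw [← hterm a ha, mul_nonneg_iff_of_pos_right hzM,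
      mul_nonneg_iff_of_pos_left (hf a ha)] at hda
    have hφb : 0 ≤ φ b := hda.trans (hreg.monotoneOn (mem_Icc.1 ha) (mem_Icc.1 hb) hab)
    rw [← hterm b hb]
    exact mul_nonneg (mul_nonneg (hf b hb).le hφb) hzM.le
  rw [sum_congr rfl fun k hk => by rw [hterm k hk],
    sum_Icc_max_zero_sub_succ_eq_sup' hK R hsign (hR_one.trans hR_succ.symm)]
  simp only [hR_succ, sub_zero]

/-- Under regularity (strictly increasing virtual value), the sum of the positive
parts of the virtual values equals the optimal randomized take-it-or-leave-it
revenue max_k (Σ_{ℓ≥k} f_ℓ)·z_M·u(v_k)/(u(v_k)-u(v_k-z_M)). -/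
theorem stmt10 (α β zM : ℝ) (hα : 0 < α) (hβ : 0 < β)
    (K : ℕ) (hK : 1 ≤ K) (v f : ℕ → ℝ)
    (hv1 : v 1 = 0) (hvmono : StrictMonoOn v (Set.Icc 1 K)) (hvK : v K < zM)
    (hf : ∀ k ∈ Finset.Icc 1 K, 0 < f k)
    (u : ℝ → ℝ) (hu : u = fun x => β * (Real.exp (α * x) - 1))
    (S : ℕ → ℝ) (hS : ∀ k, S k = ∑ ℓ ∈ Finset.Icc k K, f ℓ)
    (φ : ℕ → ℝ)
    (hφ : ∀ k, φ k = (1 / f k) * (S k * u (v k) / (u (v k) - u (v k - zM))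
        - S (k + 1) * u (v (k + 1)) / (u (v (k + 1)) - u (v (k + 1) - zM))))
    (hreg : StrictMonoOn φ (Set.Icc 1 K)) :
    ∑ k ∈ Finset.Icc 1 K, max 0 (f k * φ k * zM)
      = (Finset.Icc 1 K).sup' (Finset.nonempty_Icc.mpr hK)
          (fun k => S k * zM * u (v k) / (u (v k) - u (v k - zM))) :=
  stmt10_general α β zM K hK v f hv1 hvmono hvK hf u hu S hS φ hφ hreg
end

section
/- For exponential utility u(x)=β(e^{αx}-1), the derivative of U_k(v) = x(k)·e^{αv}·β + constant with respect to v is α·x(k)·β·e^{αv}; hence if x(k) ≥ x(k') then U_k − U_{k'} is nondecreasing in v. Combined with single-crossing (U_k(v_{crossing}) = U_{k'}(v_{crossing}) at adjacent indices), this implies the loser-pay auction utility curves satisfy: for k' < k, U_k(v) ≥ U_{k'}(v) for all v ≥ v_k. -/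
/-! Each `U k` is an affine function of the same increasing utility `u`, with slope `x k`. So
`U k - U k'` is nondecreasing when `x k' ≤ x k`; since `U (n + 1)` and `U n` cross at `v (n + 1)`,
`U n ≤ U (n + 1)` from there on, and chaining these adjacent comparisons along the increasing
values `v` gives `U k' ≤ U k` on `[v k, ∞)`. -/

open Real

lemma hasDerivAt_expUtility (α β t : ℝ) :
    HasDerivAt (fun s => β * (exp (α * s) - 1)) (α * β * exp (α * t)) t := by
  rw [show α * β * exp (α * t) = β * (exp (α * t) * (α * 1)) by ring]
  exact ((((hasDerivAt_id' t).const_mul α).exp).sub_const 1).const_mul β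

lemma monotone_expUtility {α β : ℝ} (hα : 0 ≤ α) (hβ : 0 ≤ β) :
    Monotone fun s => β * (exp (α * s) - 1) := fun _ _ hst => by
  dsimp only
  gcongr

lemma Monotone.affine_sub_affine {f : ℝ → ℝ} (hf : Monotone f) {a a' : ℝ} (c c' : ℝ)
    (ha : a' ≤ a) : Monotone fun w => (a * f w + c) - (a' * f w + c') := by
  have h : Monotone fun w => (a - a') * f w + (c - c') :=
    (hf.const_mul (sub_nonneg.mpr ha)).add_const _
  convert h using 2
  ring

section SingleCrossing

variable {U : ℕ → ℝ → ℝ} {v : ℕ → ℝ}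

lemma le_succ_of_crossing {n : ℕ} (hcross : U (n + 1) (v (n + 1)) = U n (v (n + 1)))
    (hmono : Monotone fun w => U (n + 1) w - U n w) {w : ℝ} (hw : v (n + 1) ≤ w) :
    U n w ≤ U (n + 1) w := by
  have h : U (n + 1) (v (n + 1)) - U n (v (n + 1)) ≤ U (n + 1) w - U n w := hmono hw
  linarith

lemma le_of_singleCrossing (hv : Monotone v)
    (hcross : ∀ n, U (n + 1) (v (n + 1)) = U n (v (n + 1)))
    (hmono : ∀ n, Monotone fun w => U (n + 1) w - U n w)
    {k k' : ℕ} (hk : k' < k) {w : ℝ} (hw : v k ≤ w) : U k' w ≤ U k w := by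
  induction k, hk using Nat.le_induction generalizing w with
  | base => exact le_succ_of_crossing (hcross k') (hmono k') hw
  | succ k _ ih =>
    have hvk : v k ≤ w := (hv k.le_succ).trans hw
    exact (ih hvk).trans (le_succ_of_crossing (hcross k) (hmono k) hw)

end SingleCrossing

theorem stmt16_general (α β zM : ℝ) (hα : 0 < α) (hβ : 0 < β)
    (u : ℝ → ℝ) (hu : u = fun t => β * (Real.exp (α * t) - 1))
    (x q v : ℕ → ℝ) (hxmono : Monotone x)
    (hvmono : StrictMono v)
    (U : ℕ → ℝ → ℝ)
    (hU : ∀ k w, U k w = x k * u w + (1 - x k) * q k * u (-zM))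
    (hcross : ∀ k, 1 ≤ k → U k (v k) = U (k - 1) (v k)) :
    (∀ k t, HasDerivAt (fun w => U k w) (α * x k * β * Real.exp (α * t)) t)
    ∧ (∀ k k', x k' ≤ x k → Monotone (fun w => U k w - U k' w))
    ∧ (∀ k k', k' < k → ∀ w, v k ≤ w → U k' w ≤ U k w) := by
  subst hu
  have hmono : ∀ k k', x k' ≤ x k → Monotone (fun w => U k w - U k' w) := fun k k' hx => by
    simp only [hU]
    exact (monotone_expUtility hα.le hβ.le).affine_sub_affine _ _ hx
  refine ⟨fun k t => ?_, hmono, fun k k' hk w hw => ?_⟩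
  · have h := ((hasDerivAt_expUtility α β t).const_mul (x k)).add_const
      ((1 - x k) * q k * (β * (exp (α * -zM) - 1)))
    rw [show α * x k * β * exp (α * t) = x k * (α * β * exp (α * t)) by ring]
    exact h.congr_of_eventuallyEq (.of_forall (hU k))
  · exact le_of_singleCrossing hvmono.monotone (fun n => hcross (n + 1) n.succ_pos)
      (fun n => hmono (n + 1) n (hxmono n.le_succ)) hk hw

/-- For exponential utility, the derivative of U_k in v is α·x(k)·β·e^{αv}; hence
if x(k') ≤ x(k) then U_k − U_{k'} is nondecreasing, and together with the
single-crossing conditions U_k(v_k) = U_{k-1}(v_k) this yields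
U_{k'}(w) ≤ U_k(w) for all k' < k and w ≥ v_k (BIC from below). -/
theorem stmt16 (α β zM : ℝ) (hα : 0 < α) (hβ : 0 < β)
    (u : ℝ → ℝ) (hu : u = fun t => β * (Real.exp (α * t) - 1))
    (x q v : ℕ → ℝ) (hxmono : Monotone x) (hx0 : ∀ k, 0 ≤ x k)
    (hvmono : StrictMono v)
    (U : ℕ → ℝ → ℝ)
    (hU : ∀ k w, U k w = x k * u w + (1 - x k) * q k * u (-zM))
    (hcross : ∀ k, 1 ≤ k → U k (v k) = U (k - 1) (v k)) :
    (∀ k t, HasDerivAt (fun w => U k w) (α * x k * β * Real.exp (α * t)) t)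
    ∧ (∀ k k', x k' ≤ x k → Monotone (fun w => U k w - U k' w))
    ∧ (∀ k k', k' < k → ∀ w, v k ≤ w → U k' w ≤ U k w) :=
  stmt16_general α β zM hα hβ u hu x q v hxmono hvmono U hU hcross
end
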